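/- Let (Yₙ(x))_{n≥1}, Y(x) be random fields on a compact set G ⊆ ℝ^d with values in ℝ, p ≥ 2. Assume: (i) sup_{x∈G} E[|Yₙ(x) − Y(x)|^{2p}] ≤ c·aₙ with aₙ → 0; (ii) E[|Yₙ(x) − Yₙ(y)|^{2p}] ≤ c|x−y|^{2p} and E[|Y(x) − Y(y)|^{2p}] ≤ c|x−y|^{2p} uniformly in n, where 2p > 2d. Then E[ sup_{x∈G} |Yₙ(x) − Y(x)|^{2p} ] → 0 as n → ∞. -/

import Mathlib

/-!
A discrete chaining argument replaces the Garsia–Rodemich–Rumsey inequality. Let `Zₙ = Yₙ - Y`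
and `q = 2p`. A volume count gives nets `F k ⊆ G` of mesh `2⁻¹ ^ k` with `#F k ≤ A · 2 ^ (d k)`.
Chaining each `x ∈ G` through its approximations in `F K, F (K + 1), …` and using continuity,
`|Zₙ x| ≤ max_{F K} |Zₙ| + ∑_{k ≥ K} max |Zₙ u - Zₙ v|`, the inner maxima over pairs
`(u, v) ∈ F (k + 1) × F k` at distance at most `2 · 2⁻¹ ^ k`. By Minkowski's inequality,
`‖sup_G |Zₙ|‖_q` is at most `(#F K · c aₙ)^{1/q}` plus a multiple of the tail of
`∑ₖ (#F (k + 1) · #F k)^{1/q} 2⁻¹ ^ k`, a geometric series with ratio `2 ^ (2d/q - 1) < 1`.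
Let `n → ∞`, then `K → ∞`.
-/

open MeasureTheory Metric Filter Topology Module
open scoped ENNReal NNReal

theorem ENNReal.tendsto_nhds_zero_of_le_add {ι : Type*} {l : Filter ι} {u : ι → ℝ≥0∞}
    {v : ℕ → ι → ℝ≥0∞} {t : ℕ → ℝ≥0∞} (hv : ∀ K, Tendsto (v K) l (𝓝 0)) (ht : Tendsto t atTop (𝓝 0))
    (huvt : ∀ K i, u i ≤ v K i + t K) : Tendsto u l (𝓝 0) := by
  rw [ENNReal.tendsto_nhds_zero] at ht ⊢
  intro ε hε
  have hε2 : 0 < ε / 2 := ENNReal.half_pos hε.ne'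
  obtain ⟨K, hK⟩ := (ht _ hε2).exists
  filter_upwards [ENNReal.tendsto_nhds_zero.1 (hv K) _ hε2] with i hi
  calc u i ≤ v K i + t K := huvt K i
    _ ≤ ε / 2 + ε / 2 := add_le_add hi hK
    _ = ε := ENNReal.add_halves ε

section LpEstimates

variable {α ι V : Type*} [NormedAddCommGroup V] {m : MeasurableSpace α} {μ : Measure α} {q : ℝ}

theorem Finset.aemeasurable_sup {s : Finset ι} {f : ι → α → ℝ≥0∞}
    (hf : ∀ i ∈ s, AEMeasurable (f i) μ) : AEMeasurable (fun a => s.sup fun i => f i a) μ := by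
  simp_rw [Finset.sup_eq_iSup]
  exact AEMeasurable.biSup _ s.countable_toSet hf

theorem eLpNorm'_le_rpow_mul_of_lintegral_le {E : Type*} [ENorm E] {f : α → E} {c δ : ℝ≥0∞}
    (hq : 0 < q) (h : ∫⁻ a, ‖f a‖ₑ ^ q ∂μ ≤ c * δ ^ q) : eLpNorm' f q μ ≤ c ^ (1 / q) * δ := by
  rw [eLpNorm'_eq_lintegral_enorm]
  refine (ENNReal.rpow_le_rpow h (by positivity)).trans_eq ?_
  rw [ENNReal.mul_rpow_of_nonneg _ _ (by positivity), ← ENNReal.rpow_mul, mul_one_div_cancel hq.ne',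
    ENNReal.rpow_one]

theorem eLpNorm'_sub_le_of_lintegral_le {f g : α → V} (hf : AEStronglyMeasurable f μ)
    (hg : AEStronglyMeasurable g μ) (hq : 1 ≤ q) {c δ : ℝ≥0∞}
    (hfc : ∫⁻ a, ‖f a‖ₑ ^ q ∂μ ≤ c * δ ^ q) (hgc : ∫⁻ a, ‖g a‖ₑ ^ q ∂μ ≤ c * δ ^ q) :
    eLpNorm' (f - g) q μ ≤ 2 * c ^ (1 / q) * δ := by
  have hq0 : 0 < q := by linarith
  calc eLpNorm' (f - g) q μ = eLpNorm' (f + -g) q μ := by rw [sub_eq_add_neg]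
    _ ≤ eLpNorm' f q μ + eLpNorm' g q μ :=
        (eLpNorm'_add_le hf hg.neg hq).trans_eq (by rw [eLpNorm'_neg])
    _ ≤ c ^ (1 / q) * δ + c ^ (1 / q) * δ :=
        add_le_add (eLpNorm'_le_rpow_mul_of_lintegral_le hq0 hfc)
          (eLpNorm'_le_rpow_mul_of_lintegral_le hq0 hgc)
    _ = 2 * c ^ (1 / q) * δ := by ring

theorem eLpNorm'_finset_sup_enorm_le {s : Finset ι} {f : ι → α → V}
    (hf : ∀ i ∈ s, AEStronglyMeasurable (f i) μ) (hq : 0 < q) {b : ℝ≥0∞}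
    (hb : ∀ i ∈ s, eLpNorm' (f i) q μ ≤ b) :
    eLpNorm' (fun a => s.sup fun i => ‖f i a‖ₑ) q μ ≤ (s.card : ℝ≥0∞) ^ (1 / q) * b := by
  refine eLpNorm'_le_rpow_mul_of_lintegral_le hq ?_
  calc ∫⁻ a, ‖s.sup fun i => ‖f i a‖ₑ‖ₑ ^ q ∂μ = ∫⁻ a, s.sup fun i => ‖f i a‖ₑ ^ q ∂μ := by
        refine lintegral_congr fun a => ?_
        exact map_finset_sup (ENNReal.orderIsoRpow q hq) s fun i => ‖f i a‖ₑ
    _ ≤ ∫⁻ a, ∑ i ∈ s, ‖f i a‖ₑ ^ q ∂μ :=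
        lintegral_mono fun a => Finset.sup_le fun i hi =>
          Finset.single_le_sum (f := fun i => ‖f i a‖ₑ ^ q) (fun _ _ => zero_le) hi
    _ = ∑ i ∈ s, eLpNorm' (f i) q μ ^ q := by
        rw [lintegral_finsetSum' _ fun i hi => (hf i hi).enorm.pow_const q]
        simp_rw [lintegral_rpow_enorm_eq_rpow_eLpNorm' hq]
    _ ≤ ∑ _i ∈ s, b ^ q := Finset.sum_le_sum fun i hi => ENNReal.rpow_le_rpow (hb i hi) hq.le
    _ = s.card * b ^ q := by simp

theorem eLpNorm'_tsum_le {f : ℕ → α → ℝ≥0∞} (hf : ∀ i, AEMeasurable (f i) μ) (hq : 1 ≤ q) :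
    eLpNorm' (fun a => ∑' i, f i a) q μ ≤ ∑' i, eLpNorm' (f i) q μ := by
  have hq0 : 0 < q := by linarith
  have hsum : ∀ n, AEMeasurable (fun a => ∑ i ∈ Finset.range n, f i a) μ := fun n =>
    Finset.aemeasurable_fun_sum _ fun i _ => hf i
  calc eLpNorm' (fun a => ∑' i, f i a) q μ
      = ⨆ n, eLpNorm' (∑ i ∈ Finset.range n, f i) q μ := by
        have hpow : ∀ a, (∑' i, f i a) ^ q = ⨆ n, (∑ i ∈ Finset.range n, f i a) ^ q := fun a => by
          rw [ENNReal.tsum_eq_iSup_nat]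
          exact (ENNReal.orderIsoRpow q hq0).map_iSup _
        simp only [eLpNorm'_eq_lintegral_enorm, enorm_eq_self, Finset.sum_apply, hpow]
        rw [lintegral_iSup' (fun n => (hsum n).pow_const q) (Eventually.of_forall fun a =>
          (ENNReal.monotone_rpow_of_nonneg hq0.le).comp fun n m hnm =>
            Finset.sum_le_sum_of_subset (Finset.range_mono hnm))]
        exact (ENNReal.orderIsoRpow (1 / q) (by positivity)).map_iSup _
    _ ≤ ∑' i, eLpNorm' (f i) q μ := iSup_le fun n =>
        (eLpNorm'_sum_le (fun i _ => (hf i).aestronglyMeasurable) hq).trans (ENNReal.sum_le_tsum _)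

theorem lintegral_iSup_enorm_rpow_eq {κ : Sort*} {f : α → κ → V} (hq : 0 < q) :
    ∫⁻ a, ⨆ i, ‖f a i‖ₑ ^ q ∂μ = eLpNorm' (fun a => ⨆ i, ‖f a i‖ₑ) q μ ^ q := by
  rw [← lintegral_rpow_enorm_eq_rpow_eLpNorm' hq]
  refine lintegral_congr fun a => ?_
  rw [enorm_eq_self]
  exact ((ENNReal.orderIsoRpow q hq).map_iSup fun i => ‖f a i‖ₑ).symm

end LpEstimates

section Chaining

variable {T : Type*} [PseudoEMetricSpace T]

noncomputable def chainLinks (F : ℕ → Finset T) (r : ℕ → ℝ≥0) (k : ℕ) : Finset (T × T) :=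
  {uv ∈ F (k + 1) ×ˢ F k | edist uv.1 uv.2 ≤ r (k + 1) + r k}

noncomputable def chainingSum (F : ℕ → Finset T) (r : ℕ → ℝ≥0) (q : ℝ) : ℝ≥0∞ :=
  ∑' k, ((chainLinks F r k).card : ℝ≥0∞) ^ (1 / q) * (r (k + 1) + r k)

theorem tendsto_chainingSum_shift {F : ℕ → Finset T} {r : ℕ → ℝ≥0} {q : ℝ}
    (h : chainingSum F r q ≠ ⊤) :
    Tendsto (fun K => chainingSum (fun k => F (K + k)) (fun k => r (K + k)) q) atTop (𝓝 0) := by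
  refine (ENNReal.tendsto_sum_nat_add _ h).congr fun K => tsum_congr fun k => ?_
  rw [add_comm k K]
  rfl

variable {V : Type*} [NormedAddCommGroup V] {G : Set T} {F : ℕ → Finset T} {r : ℕ → ℝ≥0}

theorem enorm_le_sup_add_tsum_sup_chainLinks (hr : Tendsto r atTop (𝓝 0))
    (hFG : ∀ k, ↑(F k) ⊆ G) (hF : ∀ k, IsCover (r k) G (F k)) {f : T → V} (hf : ContinuousOn f G)
    {x : T} (hx : x ∈ G) :
    ‖f x‖ₑ ≤ (F 0).sup (fun u => ‖f u‖ₑ) +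
      ∑' k, (chainLinks F r k).sup fun uv => ‖f uv.1 - f uv.2‖ₑ := by
  choose π hπF hπx using fun k => hF k hx
  have hπx : ∀ k, edist x (π k) ≤ r k := hπx
  have hπ : Tendsto π atTop (𝓝[G] x) := by
    refine tendsto_nhdsWithin_iff.2 ⟨?_, Eventually.of_forall fun k => hFG k (hπF k)⟩
    rw [tendsto_iff_edist_tendsto_0]
    exact tendsto_of_tendsto_of_tendsto_of_le_of_le tendsto_const_nhds (ENNReal.tendsto_coe.2 hr)
      (fun _ => zero_le) fun k => (edist_comm _ _).trans_le (hπx k)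
  have hpartial : ∀ m, ‖f (π m)‖ₑ ≤ (F 0).sup (fun u => ‖f u‖ₑ) +
      ∑ k ∈ Finset.range m, (chainLinks F r k).sup fun uv => ‖f uv.1 - f uv.2‖ₑ := by
    intro m
    induction m with
    | zero => simpa using Finset.le_sup (f := fun u => ‖f u‖ₑ) (hπF 0)
    | succ m ih =>
      have hlink : (π (m + 1), π m) ∈ chainLinks F r m := by
        simp only [chainLinks, Finset.mem_filter, Finset.mem_product]
        exact ⟨⟨hπF _, hπF _⟩, (edist_triangle_left _ _ x).trans (add_le_add (hπx _) (hπx _))⟩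
      calc ‖f (π (m + 1))‖ₑ ≤ ‖f (π (m + 1)) - f (π m)‖ₑ + ‖f (π m)‖ₑ := by
            simpa using enorm_add_le (f (π (m + 1)) - f (π m)) (f (π m))
        _ ≤ _ := add_le_add (Finset.le_sup (f := fun uv => ‖f uv.1 - f uv.2‖ₑ) hlink) ih
        _ = _ := by rw [Finset.sum_range_succ]; ring
  exact le_of_tendsto' ((hf x hx).tendsto.comp hπ).enorm fun m =>
    (hpartial m).trans (add_le_add le_rfl (ENNReal.sum_le_tsum _))

theorem eLpNorm'_iSup_enorm_le_chainingSum {Ω : Type*} [MeasurableSpace Ω] {P : Measure Ω}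
    {q : ℝ} (hq : 1 ≤ q) (hr : Tendsto r atTop (𝓝 0)) (hFG : ∀ k, ↑(F k) ⊆ G)
    (hF : ∀ k, IsCover (r k) G (F k)) {Z : Ω → T → V}
    (hZ : ∀ x, AEStronglyMeasurable (fun ω => Z ω x) P) (hcont : ∀ᵐ ω ∂P, ContinuousOn (Z ω) G)
    {b L : ℝ≥0∞} (hb : ∀ x ∈ G, eLpNorm' (fun ω => Z ω x) q P ≤ b)
    (hL : ∀ x ∈ G, ∀ y ∈ G, eLpNorm' (fun ω => Z ω x - Z ω y) q P ≤ L * edist x y) :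
    eLpNorm' (fun ω => ⨆ x : G, ‖Z ω x‖ₑ) q P ≤
      ((F 0).card : ℝ≥0∞) ^ (1 / q) * b + L * chainingSum F r q := by
  have hq0 : 0 < q := by linarith
  set M : Ω → ℝ≥0∞ := fun ω => (F 0).sup fun u => ‖Z ω u‖ₑ
  set B : ℕ → Ω → ℝ≥0∞ := fun k ω => (chainLinks F r k).sup fun uv => ‖Z ω uv.1 - Z ω uv.2‖ₑ
  have hM : AEMeasurable M P := Finset.aemeasurable_sup fun u _ => (hZ u).enorm
  have hB : ∀ k, AEMeasurable (B k) P := fun k =>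
    Finset.aemeasurable_sup fun uv _ => ((hZ uv.1).sub (hZ uv.2)).enorm
  have hlinks : ∀ k, eLpNorm' (B k) q P ≤
      ((chainLinks F r k).card : ℝ≥0∞) ^ (1 / q) * (L * (r (k + 1) + r k)) := by
    refine fun k => eLpNorm'_finset_sup_enorm_le (fun uv _ => (hZ uv.1).sub (hZ uv.2)) hq0 ?_
    intro uv huv
    simp only [chainLinks, Finset.mem_filter, Finset.mem_product] at huv
    exact (hL _ (hFG _ huv.1.1) _ (hFG _ huv.1.2)).trans (by gcongr; exact huv.2)
  calc eLpNorm' (fun ω => ⨆ x : G, ‖Z ω x‖ₑ) q P ≤ eLpNorm' (M + fun ω => ∑' k, B k ω) q P := by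
        refine eLpNorm'_mono_enorm_ae hq0.le ?_
        filter_upwards [hcont] with ω hω
        simpa using iSup_le fun x : G =>
          enorm_le_sup_add_tsum_sup_chainLinks hr hFG hF hω x.2
    _ ≤ eLpNorm' M q P + ∑' k, eLpNorm' (B k) q P :=
        (eLpNorm'_add_le hM.aestronglyMeasurable
          (AEMeasurable.tsum hB).aestronglyMeasurable hq).trans
          (add_le_add le_rfl (eLpNorm'_tsum_le hB hq))
    _ ≤ ((F 0).card : ℝ≥0∞) ^ (1 / q) * b +
          ∑' k, ((chainLinks F r k).card : ℝ≥0∞) ^ (1 / q) * (L * (r (k + 1) + r k)) :=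
        add_le_add (eLpNorm'_finset_sup_enorm_le (fun u _ => hZ u) hq0 fun u hu => hb u (hFG 0 hu))
          (ENNReal.tsum_le_tsum hlinks)
    _ = _ := by
        rw [chainingSum, ← ENNReal.tsum_mul_left]
        congr 1
        exact tsum_congr fun k => by ring

theorem card_chainLinks_le (F : ℕ → Finset T) (r : ℕ → ℝ≥0) (k : ℕ) :
    (chainLinks F r k).card ≤ (F (k + 1)).card * (F k).card :=
  (Finset.card_filter_le _ _).trans_eq (Finset.card_product _ _)

theorem chainingSum_dyadic_ne_top {A : ℝ≥0∞} (hA : A ≠ ⊤) {d : ℕ}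
    (hF : ∀ k, ((F k).card : ℝ≥0∞) ≤ A * (2 ^ d) ^ k) {q : ℝ} (hq : 2 * d < q) :
    chainingSum F (fun k => (2⁻¹ : ℝ≥0) ^ k) q ≠ ⊤ := by
  have hq0 : 0 < q := by linarith [(Nat.cast_nonneg d : (0 : ℝ) ≤ d)]
  set ρ : ℝ≥0∞ := 2 ^ (2 * d / q) * 2⁻¹
  have hρ : ρ < 1 := by
    have h2 : (2 : ℝ≥0∞) ^ (2 * d / q) < 2 ^ (1 : ℝ) :=
      ENNReal.rpow_lt_rpow_of_exponent_lt (by norm_num) ENNReal.ofNat_ne_top ((div_lt_one hq0).2 hq)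
    calc ρ < 2 ^ (1 : ℝ) * 2⁻¹ := ENNReal.mul_lt_mul_left (by simp) (by simp) h2
      _ = 1 := by simp [ENNReal.mul_inv_cancel]
  have hterm : ∀ k, ((chainLinks F (fun k => (2⁻¹ : ℝ≥0) ^ k) k).card : ℝ≥0∞) ^ (1 / q) *
      (((2⁻¹ : ℝ≥0) ^ (k + 1) : ℝ≥0) + ((2⁻¹ : ℝ≥0) ^ k : ℝ≥0)) ≤
      (A * A * 2 ^ d) ^ (1 / q) * 2 * ρ ^ k := by
    intro k
    have hcard : ((chainLinks F (fun k => (2⁻¹ : ℝ≥0) ^ k) k).card : ℝ≥0∞) ≤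
        A * A * 2 ^ d * (2 : ℝ≥0∞) ^ ((2 * d * k : ℕ) : ℝ) := by
      calc ((chainLinks F (fun k => (2⁻¹ : ℝ≥0) ^ k) k).card : ℝ≥0∞)
          ≤ ((F (k + 1)).card : ℝ≥0∞) * (F k).card := by exact_mod_cast card_chainLinks_le F _ k
        _ ≤ A * (2 ^ d) ^ (k + 1) * (A * (2 ^ d) ^ k) := by gcongr <;> apply hF
        _ = _ := by rw [ENNReal.rpow_natCast]; ring
    have hradii : (((2⁻¹ : ℝ≥0) ^ (k + 1) : ℝ≥0) + ((2⁻¹ : ℝ≥0) ^ k : ℝ≥0) : ℝ≥0∞) ≤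
        2 * 2⁻¹ ^ k := by
      push_cast
      rw [two_mul]
      exact add_le_add (pow_le_pow_of_le_one (by simp) (ENNReal.inv_le_one.2 one_le_two) k.le_succ)
        le_rfl
    calc _ ≤ (A * A * 2 ^ d * (2 : ℝ≥0∞) ^ ((2 * d * k : ℕ) : ℝ)) ^ (1 / q) * (2 * 2⁻¹ ^ k) := by
          gcongr
      _ = (A * A * 2 ^ d) ^ (1 / q) * 2 * ρ ^ k := by
          rw [ENNReal.mul_rpow_of_nonneg _ _ (by positivity), ← ENNReal.rpow_mul, mul_pow,
            ← ENNReal.rpow_mul_natCast]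
          rw [show ((2 * d * k : ℕ) : ℝ) * (1 / q) = 2 * d / q * k by push_cast; ring]
          ring
  refine ne_top_of_le_ne_top ?_ (ENNReal.tsum_le_tsum hterm)
  rw [ENNReal.tsum_mul_left, ENNReal.tsum_geometric]
  exact ENNReal.mul_ne_top (ENNReal.mul_ne_top
    (ENNReal.rpow_ne_top_of_nonneg (by positivity) (by finiteness)) (by simp))
    (ENNReal.inv_ne_top.2 (tsub_pos_of_lt hρ).ne')

end Chaining

section Nets

variable {E : Type*} [NormedAddCommGroup E] [NormedSpace ℝ E] [FiniteDimensional ℝ E]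

theorem Metric.IsSeparated.finset_card_le {s : Finset E} {ε : ℝ≥0} (hε : 0 < ε) {R : ℝ}
    (hR : 0 ≤ R) (hs : IsSeparated (ε : ℝ≥0∞) (s : Set E)) (hsR : (s : Set E) ⊆ closedBall 0 R) :
    (s.card : ℝ) ≤ (1 + 2 * R / ε) ^ finrank ℝ E := by
  rcases subsingleton_or_nontrivial E with hE | hE
  · simpa [finrank_zero_of_subsingleton] using s.card_le_one_of_subsingleton
  let _ : MeasurableSpace E := borel E
  have _ : BorelSpace E := ⟨rfl⟩
  set μ : Measure E := Measure.addHaar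
  set ρ : ℝ := ε / 2 with hρ
  have hdisj : (s : Set E).PairwiseDisjoint fun u => ball u ρ := by
    intro u hu v hv huv
    refine Set.disjoint_left.2 fun z hzu hzv => (hs hu hv huv).not_ge ?_
    rw [edist_dist, ← ENNReal.ofReal_coe_nnreal]
    refine ENNReal.ofReal_le_ofReal ?_
    linarith [dist_triangle_right u v z, mem_ball.1 hzu, mem_ball.1 hzv, dist_comm z u,
      dist_comm z v]
  have hunion : (⋃ u ∈ s, ball u ρ) ⊆ ball 0 (R + ρ) := by
    refine Set.iUnion₂_subset fun u hu z hz => mem_ball.2 ?_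
    linarith [dist_triangle z u 0, mem_ball.1 hz, mem_closedBall.1 (hsR hu)]
  have hvol : (s.card : ℝ≥0∞) * μ (ball 0 ρ) ≤ μ (ball 0 (R + ρ)) :=
    calc (s.card : ℝ≥0∞) * μ (ball 0 ρ) = ∑ u ∈ s, μ (ball u ρ) := by
          simp [Measure.addHaar_ball_center]
      _ = μ (⋃ u ∈ s, ball u ρ) := (measure_biUnion_finset hdisj fun _ _ => measurableSet_ball).symm
      _ ≤ μ (ball 0 (R + ρ)) := measure_mono hunion
  rw [Measure.addHaar_ball μ 0 (r := ρ) (by positivity),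
    Measure.addHaar_ball μ 0 (r := R + ρ) (by positivity), ← mul_assoc,
    ENNReal.mul_le_mul_iff_left (measure_ball_pos μ 0 one_pos).ne' measure_ball_lt_top.ne,
    ← ENNReal.ofReal_natCast, ← ENNReal.ofReal_mul (by positivity),
    ENNReal.ofReal_le_ofReal_iff (by positivity)] at hvol
  calc (s.card : ℝ) ≤ (R + ρ) ^ finrank ℝ E / ρ ^ finrank ℝ E :=
        (le_div_iff₀ (by positivity)).2 hvol
    _ = (1 + 2 * R / ε) ^ finrank ℝ E := by
        rw [← div_pow, hρ]
        congr 1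
        field_simp
        ring

theorem exists_finset_isCover_card_le {G : Set E} (hG : IsCompact G) {R : ℝ} (hR : 0 ≤ R)
    (hGR : G ⊆ closedBall 0 R) {ε : ℝ≥0} (hε : 0 < ε) :
    ∃ F : Finset E, ↑F ⊆ G ∧ IsCover ε G F ∧ (F.card : ℝ) ≤ (1 + 2 * R / ε) ^ finrank ℝ E := by
  have hpack : packingNumber ε G ≠ ⊤ := by
    obtain ⟨N, -, hNfin, hN⟩ := exists_finite_isCover_of_isCompact (ε := ε / 2) (by positivity) hG
    have hle := (packingNumber_two_mul_le_externalCoveringNumber (ε / 2) G).trans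
      hN.externalCoveringNumber_le_encard
    rw [mul_div_cancel₀ _ two_ne_zero] at hle
    exact ne_top_of_le_ne_top hNfin.encard_lt_top.ne hle
  have hfin : (maximalSeparatedSet ε G).Finite :=
    Set.encard_ne_top_iff.1 (by rwa [encard_maximalSeparatedSet hpack])
  refine ⟨hfin.toFinset, by simpa using maximalSeparatedSet_subset, by
    simpa using isCover_maximalSeparatedSet hpack, ?_⟩
  exact IsSeparated.finset_card_le hε hR (by simpa using isSeparated_maximalSeparatedSet)
    (by simpa using maximalSeparatedSet_subset.trans hGR)

theorem exists_dyadic_isCover {G : Set E} (hG : IsCompact G) :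
    ∃ (F : ℕ → Finset E) (A : ℝ≥0∞), A ≠ ⊤ ∧ (∀ k, ↑(F k) ⊆ G) ∧
      (∀ k, IsCover ((2⁻¹ : ℝ≥0) ^ k) G (F k)) ∧
      ∀ k, ((F k).card : ℝ≥0∞) ≤ A * (2 ^ finrank ℝ E) ^ k := by
  obtain ⟨R, hGR⟩ := hG.isBounded.subset_closedBall 0
  have hR : 0 ≤ max R 0 := le_max_right R 0
  have hGR' : G ⊆ closedBall 0 (max R 0) :=
    hGR.trans (closedBall_subset_closedBall (le_max_left _ _))
  choose F hFG hFcov hFcard using fun k : ℕ =>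
    exists_finset_isCover_card_le hG hR hGR' (ε := 2⁻¹ ^ k) (by positivity)
  refine ⟨F, ENNReal.ofReal ((1 + 2 * max R 0) ^ finrank ℝ E), ENNReal.ofReal_ne_top, hFG, hFcov,
    fun k => ?_⟩
  have hscale : 1 + 2 * max R 0 / ((2⁻¹ ^ k : ℝ≥0) : ℝ) ≤ (1 + 2 * max R 0) * 2 ^ k := by
    have h1 : (1 : ℝ) ≤ 2 ^ k := one_le_pow₀ one_le_two
    push_cast
    rw [inv_pow, div_inv_eq_mul]
    nlinarith
  calc ((F k).card : ℝ≥0∞) = ENNReal.ofReal (F k).card := (ENNReal.ofReal_natCast _).symm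
    _ ≤ ENNReal.ofReal ((1 + 2 * max R 0) ^ finrank ℝ E * (2 ^ finrank ℝ E) ^ k) := by
        refine ENNReal.ofReal_le_ofReal ((hFcard k).trans ?_)
        rw [← pow_mul, mul_comm (finrank ℝ E) k, pow_mul, ← mul_pow]
        exact pow_le_pow_left₀ (by positivity) hscale _
    _ = _ := by
        rw [ENNReal.ofReal_mul (by positivity)]
        simp

theorem exists_eLpNorm'_iSup_enorm_le {V Ω : Type*} [NormedAddCommGroup V] [MeasurableSpace Ω]
    (P : Measure Ω) {G : Set E} (hG : IsCompact G) {q : ℝ} (hq : 1 ≤ q)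
    (hqd : 2 * finrank ℝ E < q) :
    ∃ (N : ℕ → ℕ) (t : ℕ → ℝ≥0∞), Tendsto t atTop (𝓝 0) ∧
      ∀ (K : ℕ) (Z : Ω → E → V), (∀ x, AEStronglyMeasurable (fun ω => Z ω x) P) →
        (∀ᵐ ω ∂P, ContinuousOn (Z ω) G) → ∀ b L : ℝ≥0∞,
        (∀ x ∈ G, eLpNorm' (fun ω => Z ω x) q P ≤ b) →
        (∀ x ∈ G, ∀ y ∈ G, eLpNorm' (fun ω => Z ω x - Z ω y) q P ≤ L * edist x y) →
        eLpNorm' (fun ω => ⨆ x : G, ‖Z ω x‖ₑ) q P ≤ (N K : ℝ≥0∞) ^ (1 / q) * b + L * t K := by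
  obtain ⟨F, A, hA, hFG, hFcov, hFcard⟩ := exists_dyadic_isCover hG
  refine ⟨fun K => (F K).card, fun K => chainingSum (fun k => F (K + k)) (fun k => 2⁻¹ ^ (K + k)) q,
    tendsto_chainingSum_shift (chainingSum_dyadic_ne_top hA hFcard hqd),
    fun K Z hZ hcont b L hb hL => ?_⟩
  have hr : Tendsto (fun k => (2⁻¹ : ℝ≥0) ^ (K + k)) atTop (𝓝 0) := by
    simp_rw [pow_add]
    simpa using (NNReal.tendsto_pow_atTop_nhds_zero_of_lt_one
      (by norm_num : (2⁻¹ : ℝ≥0) < 1)).const_mul ((2⁻¹ : ℝ≥0) ^ K)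
  exact eLpNorm'_iSup_enorm_le_chainingSum hq hr (fun k => hFG _) (fun k => hFcov _) hZ hcont hb hL

end Nets

theorem sup_moment_convergence_from_pointwise_rate_general (d : ℕ)
    {Ω : Type} [MeasurableSpace Ω] (P : Measure Ω)
    (G : Set (EuclideanSpace ℝ (Fin d))) (hGcomp : IsCompact G)
    (p : ℝ) (hp : 2 ≤ p) (hpd : 2 * (d : ℝ) < 2 * p)
    (Yn : ℕ → Ω → EuclideanSpace ℝ (Fin d) → ℝ) (Y : Ω → EuclideanSpace ℝ (Fin d) → ℝ)
    (hmeasn : ∀ n x, Measurable (fun ω => Yn n ω x))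
    (hmeas : ∀ x, Measurable (fun ω => Y ω x))
    (hcontn : ∀ n, ∀ᵐ ω ∂P, ContinuousOn (Yn n ω) G)
    (hcont : ∀ᵐ ω ∂P, ContinuousOn (Y ω) G)
    (c : ℝ≥0∞) (hc : c ≠ ⊤) (a : ℕ → ℝ≥0∞)
    (ha : Tendsto a atTop (nhds 0))
    (hrate : ∀ n, ∀ x ∈ G,
      (∫⁻ ω, (‖Yn n ω x - Y ω x‖₊ : ℝ≥0∞) ^ (2 * p) ∂P) ≤ c * a n)
    (hholdn : ∀ n, ∀ x ∈ G, ∀ y ∈ G,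
      (∫⁻ ω, (‖Yn n ω x - Yn n ω y‖₊ : ℝ≥0∞) ^ (2 * p) ∂P) ≤
        c * (‖x - y‖₊ : ℝ≥0∞) ^ (2 * p))
    (hhold : ∀ x ∈ G, ∀ y ∈ G,
      (∫⁻ ω, (‖Y ω x - Y ω y‖₊ : ℝ≥0∞) ^ (2 * p) ∂P) ≤
        c * (‖x - y‖₊ : ℝ≥0∞) ^ (2 * p)) :
    Tendsto (fun n => ∫⁻ ω, ⨆ x : G, (‖Yn n ω x - Y ω x‖₊ : ℝ≥0∞) ^ (2 * p) ∂P)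
      atTop (nhds 0) := by
  set q := 2 * p
  have hq : 1 ≤ q := by linarith
  have hq0 : 0 < q := by linarith
  obtain ⟨N, t, ht, hchain⟩ :=
    exists_eLpNorm'_iSup_enorm_le (V := ℝ) P hGcomp hq (by simpa using hpd)
  have hpt : ∀ n, ∀ x ∈ G, eLpNorm' (fun ω => Yn n ω x - Y ω x) q P ≤ (c * a n) ^ (1 / q) := by
    intro n x hx
    rw [eLpNorm'_eq_lintegral_enorm]
    exact ENNReal.rpow_le_rpow (hrate n x hx) (by positivity)
  have hinc : ∀ n, ∀ x ∈ G, ∀ y ∈ G, eLpNorm' (fun ω => (Yn n ω x - Y ω x) - (Yn n ω y - Y ω y))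
      q P ≤ 2 * c ^ (1 / q) * edist x y := by
    intro n x hx y hy
    rw [edist_eq_enorm_sub, show (fun ω => (Yn n ω x - Y ω x) - (Yn n ω y - Y ω y)) =
        (fun ω => Yn n ω x - Yn n ω y) - fun ω => Y ω x - Y ω y by
      ext; simp only [Pi.sub_apply]; ring]
    exact eLpNorm'_sub_le_of_lintegral_le ((hmeasn n x).sub (hmeasn n y)).aestronglyMeasurable
      ((hmeas x).sub (hmeas y)).aestronglyMeasurable hq (hholdn n x hx y hy) (hhold x hx y hy)
  have hca : Tendsto (fun n => (c * a n) ^ (1 / q)) atTop (𝓝 0) := by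
    simpa [hq0] using (ENNReal.Tendsto.const_mul ha (Or.inr hc)).ennrpow_const (1 / q)
  have hfirst : ∀ K, Tendsto (fun n => (N K : ℝ≥0∞) ^ (1 / q) * (c * a n) ^ (1 / q)) atTop
      (𝓝 0) := by
    intro K
    simpa using ENNReal.Tendsto.const_mul hca
      (Or.inr (ENNReal.rpow_ne_top_of_nonneg (by positivity) (ENNReal.natCast_ne_top _)))
  have htail : Tendsto (fun K => 2 * c ^ (1 / q) * t K) atTop (𝓝 0) := by
    simpa using ENNReal.Tendsto.const_mul ht
      (Or.inr (ENNReal.mul_ne_top (by simp) (ENNReal.rpow_ne_top_of_nonneg (by positivity) hc)))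
  have hsup := ENNReal.tendsto_nhds_zero_of_le_add hfirst htail fun K n =>
    hchain K (fun ω x => Yn n ω x - Y ω x)
      (fun x => ((hmeasn n x).sub (hmeas x)).aestronglyMeasurable)
      (by filter_upwards [hcontn n, hcont] with ω h₁ h₂ using h₁.sub h₂) _ _ (hpt n) (hinc n)
  simp_rw [← enorm_eq_nnnorm, lintegral_iSup_enorm_rpow_eq hq0]
  simpa [hq0] using hsup.ennrpow_const q

/-- If random fields `Yₙ` converge to `Y` in `2p`-th moment uniformly over a
compact `G ⊆ ℝ^d`, with uniform two-point Lipschitz `2p`-th moment bounds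
(`2p > 2d`), then the `2p`-th moment of the supremum `sup_{x∈G} |Yₙ(x) − Y(x)|`
tends to `0`. -/
theorem sup_moment_convergence_from_pointwise_rate (d : ℕ)
    {Ω : Type} [MeasurableSpace Ω] (P : Measure Ω) [IsProbabilityMeasure P]
    (G : Set (EuclideanSpace ℝ (Fin d))) (hGcomp : IsCompact G) (hGne : G.Nonempty)
    (p : ℝ) (hp : 2 ≤ p) (hpd : 2 * (d : ℝ) < 2 * p)
    (Yn : ℕ → Ω → EuclideanSpace ℝ (Fin d) → ℝ) (Y : Ω → EuclideanSpace ℝ (Fin d) → ℝ)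
    (hmeasn : ∀ n x, Measurable (fun ω => Yn n ω x))
    (hmeas : ∀ x, Measurable (fun ω => Y ω x))
    (hcontn : ∀ n, ∀ᵐ ω ∂P, ContinuousOn (Yn n ω) G)
    (hcont : ∀ᵐ ω ∂P, ContinuousOn (Y ω) G)
    (c : ℝ≥0∞) (hc : c ≠ ⊤) (a : ℕ → ℝ≥0∞)
    (ha : Tendsto a atTop (nhds 0))
    (hrate : ∀ n, ∀ x ∈ G,
      (∫⁻ ω, (‖Yn n ω x - Y ω x‖₊ : ℝ≥0∞) ^ (2 * p) ∂P) ≤ c * a n)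
    (hholdn : ∀ n, ∀ x ∈ G, ∀ y ∈ G,
      (∫⁻ ω, (‖Yn n ω x - Yn n ω y‖₊ : ℝ≥0∞) ^ (2 * p) ∂P) ≤
        c * (‖x - y‖₊ : ℝ≥0∞) ^ (2 * p))
    (hhold : ∀ x ∈ G, ∀ y ∈ G,
      (∫⁻ ω, (‖Y ω x - Y ω y‖₊ : ℝ≥0∞) ^ (2 * p) ∂P) ≤
        c * (‖x - y‖₊ : ℝ≥0∞) ^ (2 * p)) :
    Tendsto (fun n => ∫⁻ ω, ⨆ x : G, (‖Yn n ω x - Y ω x‖₊ : ℝ≥0∞) ^ (2 * p) ∂P)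
      atTop (nhds 0) :=
  sup_moment_convergence_from_pointwise_rate_general d P G hGcomp p hp hpd Yn Y hmeasn hmeas hcontn
    hcont c hc a ha hrate hholdn hhold
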